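/- arXiv:1906.02345 — 7 statements merged into one kernel-verified Lean document; each statement's English description precedes it below -/
import Mathlib

section
/- For any square matrix a over a field F, there exists an invertible matrix g over F such that g * a * g⁻¹ = aᵀ and gᵀ = g. -/
open Polynomial Module

section Cyclic

variable {K : Type*} [Field K] (f : K[X]) (hf : f ≠ 0)

/-- The "last coefficient" functional on `K[X]/(f)`. -/
noncomputable def cycLam : AdjoinRoot f →ₗ[K] K :=
  if hd : (AdjoinRoot.powerBasis hf).dim = 0 then 0
  else (AdjoinRoot.powerBasis hf).basis.coord
    ⟨(AdjoinRoot.powerBasis hf).dim - 1, by omega⟩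

/-- The standard symmetric bilinear form on `K[X]/(f)`. -/
noncomputable def cycForm : AdjoinRoot f →ₗ[K] AdjoinRoot f →ₗ[K] K :=
  LinearMap.compr₂ (LinearMap.mul K (AdjoinRoot f)) (cycLam f hf)

lemma cycForm_apply (u v : AdjoinRoot f) :
    cycForm f hf u v = cycLam f hf (u * v) := rfl

lemma cycForm_comm (u v : AdjoinRoot f) :
    cycForm f hf u v = cycForm f hf v u := by
  rw [cycForm_apply, cycForm_apply, mul_comm]

lemma cycForm_root (u v : AdjoinRoot f) :
    cycForm f hf (AdjoinRoot.root f * u) v = cycForm f hf u (AdjoinRoot.root f * v) := by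
  rw [cycForm_apply, cycForm_apply]
  ring_nf

lemma cycLam_basis {i : Fin (AdjoinRoot.powerBasis hf).dim} :
    cycLam f hf ((AdjoinRoot.powerBasis hf).basis i)
      = if (i : ℕ) = (AdjoinRoot.powerBasis hf).dim - 1 then 1 else 0 := by
  have hd : (AdjoinRoot.powerBasis hf).dim ≠ 0 := by
    rcases i with ⟨i, hi⟩; omega
  rw [cycLam, dif_neg hd, Basis.coord_apply, Basis.repr_self, Finsupp.single_apply]
  congr 1
  simp [Fin.ext_iff, eq_comm]

lemma cycLam_gen_pow {m : ℕ} (hm : m < (AdjoinRoot.powerBasis hf).dim) :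
    cycLam f hf ((AdjoinRoot.powerBasis hf).gen ^ m)
      = if m = (AdjoinRoot.powerBasis hf).dim - 1 then 1 else 0 := by
  have hb : (AdjoinRoot.powerBasis hf).gen ^ m
      = (AdjoinRoot.powerBasis hf).basis ⟨m, hm⟩ := by
    rw [PowerBasis.coe_basis]
  rw [hb, cycLam_basis]

lemma cycForm_nondeg (v : AdjoinRoot f) (h : ∀ u, cycForm f hf u v = 0) : v = 0 := by
  by_contra hv
  set pb := AdjoinRoot.powerBasis hf with hpb
  set d := pb.dim with hdd
  set c := pb.basis.repr v with hc
  have hc0 : c ≠ 0 := fun h0 => hv (pb.basis.repr.map_eq_zero_iff.mp h0)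
  have hsupp : c.support.Nonempty := Finsupp.support_nonempty_iff.mpr hc0
  set k : Fin d := c.support.max' hsupp with hk
  have hkmem : k ∈ c.support := c.support.max'_mem hsupp
  have hkd : (k : ℕ) < d := k.isLt
  set s : ℕ := d - 1 - (k : ℕ) with hs
  have key : cycForm f hf (pb.gen ^ s) v = c k := by
    have expand : pb.gen ^ s * v = ∑ j : Fin d, c j • (pb.gen ^ s * pb.basis j) := by
      conv_lhs => rw [← pb.basis.sum_repr v]
      rw [Finset.mul_sum]
      exact Finset.sum_congr rfl fun j _ => (mul_smul_comm _ _ _)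
    rw [cycForm_apply, expand, map_sum]
    have term : ∀ j : Fin d, cycLam f hf (c j • (pb.gen ^ s * pb.basis j))
        = if j = k then c k else 0 := by
      intro j
      rw [map_smul, smul_eq_mul]
      by_cases hcj : c j = 0
      · have hjk : j ≠ k := fun hjk => by
          rw [hjk] at hcj
          exact Finsupp.mem_support_iff.mp hkmem hcj
        simp [hcj, hjk]
      · have hjmem : j ∈ c.support := Finsupp.mem_support_iff.mpr hcj
        have hjk : j ≤ k := Finset.le_max' _ _ hjmem
        have hb : pb.basis j = pb.gen ^ (j : ℕ) := by rw [PowerBasis.coe_basis]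
        rw [hb, ← pow_add]
        have hlt : s + (j : ℕ) < d := by
          have := k.isLt
          have : (j : ℕ) ≤ (k : ℕ) := hjk
          omega
        rw [cycLam_gen_pow f hf hlt]
        have hiff : (s + (j : ℕ) = d - 1) ↔ j = k := by
          rw [Fin.ext_iff]
          have : (j : ℕ) ≤ (k : ℕ) := hjk
          omega
        by_cases hjk' : j = k
        · rw [if_pos (hiff.mpr hjk'), if_pos hjk', hjk', mul_one]
        · rw [if_neg (fun hh => hjk' (hiff.mp hh)), if_neg hjk', mul_zero]
    calc (∑ j : Fin d, cycLam f hf (c j • (pb.gen ^ s * pb.basis j)))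
        = ∑ j : Fin d, if j = k then c k else 0 :=
          Finset.sum_congr rfl fun j _ => term j
      _ = c k := by simp
  have := h (pb.gen ^ s)
  rw [key] at this
  exact Finsupp.mem_support_iff.mp hkmem this

/-- Bridge between the submodule quotient and `AdjoinRoot`. -/
noncomputable def cycBridge : (K[X] ⧸ (Submodule.span K[X] {f})) ≃ₗ[K] AdjoinRoot f :=
  LinearEquiv.refl K _

lemma cycBridge_X (u : K[X] ⧸ (Submodule.span K[X] {f})) :
    cycBridge f ((X : K[X]) • u) = AdjoinRoot.root f * cycBridge f u := by
  obtain ⟨p, rfl⟩ := Submodule.Quotient.mk_surjective _ u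
  show AdjoinRoot.mk f (X * p) = AdjoinRoot.root f * AdjoinRoot.mk f p
  rw [AdjoinRoot.root, ← map_mul]

end Cyclic

section Abstract

universe u
variable {K V : Type u} [Field K] [AddCommGroup V] [Module K V] [FiniteDimensional K V]

set_option maxHeartbeats 1000000 in
theorem exists_good_form (φ : V →ₗ[K] V) :
    ∃ B : V →ₗ[K] V →ₗ[K] K,
      (∀ u v, B u v = B v u) ∧ (∀ u v, B (φ u) v = B u (φ v)) ∧
      (∀ v, (∀ u, B u v = 0) → v = 0) := by
  classical
  have tors : Module.IsTorsion K[X] (Module.AEval' φ) := by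
    intro x
    have hint : IsIntegral K φ := (Module.End.isIntegral (R := K) (M := V)).isIntegral φ
    refine ⟨⟨minpoly K φ, mem_nonZeroDivisors_of_ne_zero (minpoly.ne_zero hint)⟩, ?_⟩
    show (minpoly K φ) • x = 0
    apply (Module.AEval.of K V φ).symm.injective
    rw [Module.AEval.of_symm_smul, minpoly.aeval, zero_smul, map_zero]
  obtain ⟨ι, hι, p, hp, e, ⟨E⟩⟩ := Module.equiv_directSum_of_isTorsion tors
  have hfne : ∀ i, p i ^ e i ≠ 0 := fun i => pow_ne_zero _ (hp i).ne_zero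
  let E' : Module.AEval' φ ≃ₗ[K[X]] ∀ i, K[X] ⧸ (Submodule.span K[X] {p i ^ e i}) :=
    E.trans (DirectSum.linearEquivFunOnFintype K[X] ι _)
  let L : V →ₗ[K] ∀ i, K[X] ⧸ (Submodule.span K[X] {p i ^ e i}) :=
    (E'.restrictScalars K).toLinearMap ∘ₗ (Module.AEval.of K V φ).toLinearMap
  have hLapp : ∀ v : V, L v = E' (Module.AEval.of K V φ v) := fun v => rfl
  have hLX : ∀ v : V, L (φ v) = (X : K[X]) • L v := by
    intro v
    rw [hLapp, hLapp, ← map_smul, Module.AEval.X_smul_of]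
    rfl
  have hLbij : Function.Bijective L :=
    (E'.restrictScalars K).bijective.comp (Module.AEval.of K V φ).bijective
  -- the form on each factor
  let Bq : ∀ i, (K[X] ⧸ (Submodule.span K[X] {p i ^ e i})) →ₗ[K]
      (K[X] ⧸ (Submodule.span K[X] {p i ^ e i})) →ₗ[K] K := fun i =>
    LinearMap.compl₁₂ (cycForm (p i ^ e i) (hfne i))
      (cycBridge (p i ^ e i)).toLinearMap (cycBridge (p i ^ e i)).toLinearMap
  have hBq_comm : ∀ i x y, Bq i x y = Bq i y x := fun i x y =>
    cycForm_comm _ (hfne i) _ _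
  have hBq_X : ∀ i x y, Bq i ((X : K[X]) • x) y = Bq i x ((X : K[X]) • y) := by
    intro i x y
    show cycForm _ (hfne i) (cycBridge _ ((X : K[X]) • x)) (cycBridge _ y)
      = cycForm _ (hfne i) (cycBridge _ x) (cycBridge _ ((X : K[X]) • y))
    rw [cycBridge_X, cycBridge_X, cycForm_root]
  have hBq_nondeg : ∀ i y, (∀ x, Bq i x y = 0) → y = 0 := by
    intro i y hy
    have : cycBridge (p i ^ e i) y = 0 := by
      apply cycForm_nondeg _ (hfne i)
      intro w
      have h2 := hy ((cycBridge (p i ^ e i)).symm w)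
      rw [show Bq i ((cycBridge (p i ^ e i)).symm w) y
          = cycForm _ (hfne i) (cycBridge _ ((cycBridge (p i ^ e i)).symm w)) (cycBridge _ y)
          from rfl, LinearEquiv.apply_symm_apply] at h2
      exact h2
    exact (cycBridge (p i ^ e i)).map_eq_zero_iff.mp this
  -- the total form
  let Bp : (∀ i, K[X] ⧸ (Submodule.span K[X] {p i ^ e i})) →ₗ[K]
      (∀ i, K[X] ⧸ (Submodule.span K[X] {p i ^ e i})) →ₗ[K] K :=
    ∑ i, LinearMap.compl₁₂ (Bq i) (LinearMap.proj i) (LinearMap.proj i)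
  have hBp : ∀ u v, Bp u v = ∑ i, Bq i (u i) (v i) := by
    intro u v
    simp [Bp, LinearMap.sum_apply, LinearMap.compl₁₂_apply, LinearMap.proj_apply]
  refine ⟨LinearMap.compl₁₂ Bp L L, ?_, ?_, ?_⟩
  · intro u v
    rw [LinearMap.compl₁₂_apply, LinearMap.compl₁₂_apply, hBp, hBp]
    exact Finset.sum_congr rfl fun i _ => hBq_comm i _ _
  · intro u v
    rw [LinearMap.compl₁₂_apply, LinearMap.compl₁₂_apply, hLX, hBp, hBp]
    refine Finset.sum_congr rfl fun i _ => ?_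
    rw [Pi.smul_apply, hBq_X]
    congr 1
    rw [hLX, Pi.smul_apply]
  · intro v hv
    have hL0 : L v = 0 := by
      funext i
      apply hBq_nondeg i
      intro x
      obtain ⟨u, hu⟩ := hLbij.surjective (Pi.single i x)
      have := hv u
      rw [LinearMap.compl₁₂_apply, hBp, hu] at this
      rw [Finset.sum_eq_single i] at this
      · simpa using this
      · intro j _ hj
        rw [Pi.single_eq_of_ne hj]
        simp
      · intro hi
        exact absurd (Finset.mem_univ i) hi
    have : L v = L 0 := by rw [map_zero]; exact hL0
    exact hLbij.injective this

end Abstract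

/-- Any square matrix over a field is conjugate to its transpose
by a symmetric invertible matrix. -/
theorem stmt0 {F : Type*} [Field F] {n : ℕ} (a : Matrix (Fin n) (Fin n) F) :
    ∃ g : GL (Fin n) F,
      (g : Matrix (Fin n) (Fin n) F) * a * ((g⁻¹ : GL (Fin n) F) : Matrix (Fin n) (Fin n) F)
        = a.transpose ∧
      (g : Matrix (Fin n) (Fin n) F).transpose = (g : Matrix (Fin n) (Fin n) F) := by
  obtain ⟨B, hsymm, hadj, hnd⟩ := exists_good_form (Matrix.mulVecLin a)
  set M := LinearMap.toMatrix₂' F B with hM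
  have hBM : ∀ u v, B u v = dotProduct u (M.mulVec v) := by
    intro u v
    rw [← Matrix.toLinearMap₂'_apply' M u v, hM, Matrix.toLinearMap₂'_toMatrix']
  have hMsym : M.transpose = M := by
    ext i j
    rw [Matrix.transpose_apply, hM, LinearMap.toMatrix₂'_apply, LinearMap.toMatrix₂'_apply]
    exact hsymm _ _
  have key : a.transpose * M = M * a := by
    have h1 : ∀ u v : Fin n → F,
        dotProduct u ((a.transpose * M).mulVec v)
          = dotProduct u ((M * a).mulVec v) := by
      intro u v
      rw [← Matrix.mulVec_mulVec, ← Matrix.mulVec_mulVec]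
      rw [Matrix.dotProduct_mulVec u a.transpose, Matrix.vecMul_transpose]
      have h2 := hadj u v
      rw [Matrix.mulVecLin_apply, Matrix.mulVecLin_apply, hBM, hBM] at h2
      exact h2
    ext i j
    have := h1 (Pi.single i 1) (Pi.single j 1)
    simpa using this
  have hdet : IsUnit M.det := by
    rw [isUnit_iff_ne_zero]
    intro h0
    obtain ⟨v, hv0, hv⟩ := Matrix.exists_mulVec_eq_zero_iff.mpr h0
    exact hv0 (hnd v (fun u => by rw [hBM, hv, dotProduct_zero]))
  refine ⟨⟨M, M⁻¹, Matrix.mul_nonsing_inv M hdet, Matrix.nonsing_inv_mul M hdet⟩, ?_, ?_⟩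
  · show M * a * M⁻¹ = a.transpose
    rw [← key, Matrix.mul_assoc, Matrix.mul_nonsing_inv M hdet, Matrix.mul_one]
  · exact hMsym
end

section
/- Let F be an infinite field and W an F-subspace of Mₙ(F). If the scalar extension W ⊗_F K ⊆ Mₙ(K), for K an extension field of F, contains an invertible matrix, then W contains an invertible matrix. -/
/-!
Pick matrices `A₁, …, A_k ∈ W` and scalars `c ∈ Kᵏ` with `∑ cₜ Aₜ` invertible. The determinant
of the generic combination `∑ Xₜ Aₜ` is a polynomial `P ∈ F[X₁, …, X_k]`; it is nonzero since
`P(c) ≠ 0`, so, `F` being infinite, `P(x) ≠ 0` for some `x ∈ Fᵏ`, and then `∑ xₜ Aₜ ∈ W` is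
invertible.
-/

open MvPolynomial

namespace Matrix

variable {F n ι : Type*} [CommRing F] [Fintype n] [DecidableEq n] [Fintype ι]

noncomputable def detGenericCombination (A : ι → Matrix n n F) : MvPolynomial ι F :=
  (∑ t, (X t : MvPolynomial ι F) • (A t).map C).det

theorem aeval_detGenericCombination {R : Type*} [CommRing R] [Algebra F R]
    (A : ι → Matrix n n F) (x : ι → R) :
    aeval x (detGenericCombination A) = (∑ t, x t • (A t).map (algebraMap F R)).det := by
  rw [detGenericCombination, AlgHom.map_det]
  congr 1
  ext i j
  simp [Matrix.sum_apply]

theorem exists_det_sum_smul_ne_zero [IsDomain F] [Infinite F] {R : Type*} [CommRing R]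
    [Algebra F R] (A : ι → Matrix n n F) {c : ι → R}
    (hc : (∑ t, c t • (A t).map (algebraMap F R)).det ≠ 0) :
    ∃ x : ι → F, (∑ t, x t • A t).det ≠ 0 := by
  have hP : detGenericCombination A ≠ 0 := fun hP =>
    hc (by rw [← aeval_detGenericCombination, hP, map_zero])
  obtain ⟨x, hx⟩ : ∃ x, eval x (detGenericCombination A) ≠ 0 := by
    by_contra! h
    exact hP (MvPolynomial.funext fun x => by rw [h x, map_zero])
  refine ⟨x, ?_⟩
  simpa [← coe_aeval_eq_eval, aeval_detGenericCombination] using hx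

end Matrix

/-- If `F` is infinite and a subspace `W ⊆ Mₙ(F)` is such that its scalar extension
`W ⊗_F K ⊆ Mₙ(K)` contains an invertible matrix, then `W` contains an invertible
matrix. -/
theorem stmt6 {F K : Type*} [Field F] [Infinite F] [Field K] [Algebra F K] {n : ℕ}
    (W : Submodule F (Matrix (Fin n) (Fin n) F))
    (h : ∃ m ∈ Submodule.span K
        ((fun a : Matrix (Fin n) (Fin n) F => a.map (algebraMap F K)) '' (W : Set _)),
      IsUnit m) :
    ∃ a ∈ W, IsUnit a := by
  obtain ⟨m, hm, hmu⟩ := h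
  obtain ⟨k, c, v, rfl⟩ := Submodule.mem_span_set'.mp hm
  choose A hAW hAv using fun t => (v t).2
  have hdet : (∑ t, c t • (A t).map (algebraMap F K)).det ≠ 0 := by
    simp_rw [hAv]
    exact ((Matrix.isUnit_iff_isUnit_det _).mp hmu).ne_zero
  obtain ⟨x, hx⟩ := Matrix.exists_det_sum_smul_ne_zero A hdet
  refine ⟨∑ t, x t • A t, Submodule.sum_mem _ fun t _ => Submodule.smul_mem _ _ (hAW t), ?_⟩
  exact (Matrix.isUnit_iff_isUnit_det _).mpr hx.isUnit
end

section
/- Let M be an F[X]-module that is finite-dimensional over F and cyclic (generated by one element). Then M is isomorphic as an F[X]-module to its F-linear dual M^∨. -/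
/-!
A cyclic module that is finite-dimensional over `F` is `F[X] ⧸ (q)` for a monic `q` of degree
`n`, and `X` acts on it as multiplication by the root. On `A = F[X] ⧸ (q)` let `τ a` be the
coefficient of `X ^ (n - 1)` in the reduced representative of `a`. The form `⟨a, b⟩ = τ (a * b)`
is symmetric and satisfies `⟨c * a, b⟩ = ⟨a, c * b⟩`; it is nondegenerate because for a reduced
`f ≠ 0` of degree `d` the product `f * X ^ (n - 1 - d)` is still reduced, with `τ` equal to the
leading coefficient of `f`. A nondegenerate form for which `X` is self-adjoint identifies `M`
with `M^∨` compatibly with the actions of `X`.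
-/

open Polynomial Module

/-- The action of `X` on an `F[X]`-module, as an `F`-linear endomorphism. -/
noncomputable def XEnd (F M : Type*) [Field F] [AddCommGroup M] [Module F M]
    [Module F[X] M] [IsScalarTower F F[X] M] : M →ₗ[F] M where
  toFun m := (X : F[X]) • m
  map_add' a b := smul_add _ a b
  map_smul' c m := (smul_comm c (X : F[X]) m).symm

namespace AdjoinRoot

variable {F : Type*} [Field F] {q : F[X]} (hq : q.Monic)

noncomputable def topCoeffForm : LinearMap.BilinForm F (AdjoinRoot q) :=
  (LinearMap.mul F (AdjoinRoot q)).compr₂ ((lcoeff F (q.natDegree - 1)).comp (modByMonicHom hq))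

lemma topCoeffForm_apply (a b : AdjoinRoot q) :
    topCoeffForm hq a b = (modByMonicHom hq (a * b)).coeff (q.natDegree - 1) :=
  rfl

lemma topCoeffForm_mul_left (a b c : AdjoinRoot q) :
    topCoeffForm hq (a * b) c = topCoeffForm hq b (a * c) := by
  simp only [topCoeffForm_apply, mul_assoc, mul_left_comm a]

lemma topCoeffForm_isSymm : (topCoeffForm hq).IsSymm :=
  ⟨fun a b => by simp only [topCoeffForm_apply, mul_comm]⟩

lemma topCoeffForm_nondegenerate : (topCoeffForm hq).Nondegenerate := by
  refine (topCoeffForm_isSymm hq).isRefl.nondegenerate_iff_separatingLeft.2 fun a ha => ?_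
  obtain ⟨g, rfl⟩ := mk_surjective a
  have hfg : mk q (g %ₘ q) = mk q g := by
    simpa only [modByMonicHom_mk] using mk_leftInverse hq (mk q g)
  set f := g %ₘ q
  by_contra hg
  have hf : f ≠ 0 := fun h => hg (by rw [← hfg, h, map_zero])
  have hfq : f.natDegree < q.natDegree := natDegree_lt_natDegree hf (degree_modByMonic_lt _ hq)
  obtain ⟨k, hk⟩ : ∃ k, f.natDegree + k = q.natDegree - 1 := ⟨_, Nat.add_sub_of_le (by omega)⟩
  have hreduced : (f * X ^ k).degree < q.degree := by
    rw [degree_mul, degree_X_pow, degree_eq_natDegree hf, degree_eq_natDegree hq.ne_zero]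
    exact_mod_cast (by omega)
  apply leadingCoeff_ne_zero.2 hf
  have := ha (mk q (X ^ k))
  rwa [topCoeffForm_apply, ← hfg, ← map_mul, modByMonicHom_mk,
    (modByMonic_eq_self_iff hq).2 hreduced, ← hk, coeff_mul_X_pow] at this

end AdjoinRoot

theorem exists_monic_linearEquiv_adjoinRoot {F M : Type*} [Field F] [AddCommGroup M]
    [Module F M] [Module F[X] M] [IsScalarTower F F[X] M] [FiniteDimensional F M]
    (hcyc : ∃ m : M, Submodule.span F[X] {m} = ⊤) :
    ∃ (q : F[X]) (_ : q.Monic) (e : M ≃ₗ[F] AdjoinRoot q),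
      ∀ m : M, e ((X : F[X]) • m) = AdjoinRoot.root q * e m := by
  obtain ⟨m, hm⟩ := hcyc
  let e : (F[X] ⧸ Ideal.torsionOf F[X] M m) ≃ₗ[F[X]] M :=
    (Ideal.quotTorsionOfEquivSpanSingleton F[X] M m).trans (LinearEquiv.ofTop _ hm)
  have hI : Ideal.torsionOf F[X] M m ≠ ⊥ := fun h =>
    Polynomial.not_finite <| Module.Finite.equiv
      ((e.symm.trans (Submodule.quotEquivOfEqBot _ h)).restrictScalars F)
  obtain ⟨q, hq, hIq⟩ := exists_monic_span _ hI
  let e' : M ≃ₗ[F[X]] F[X] ⧸ Ideal.span {q} := e.symm.trans (Submodule.quotEquivOfEq _ _ hIq)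
  refine ⟨q, hq, e'.restrictScalars F, fun x => ?_⟩
  change e' (X • x) = _
  rw [map_smul]
  rfl

theorem exists_bilinForm_nondegenerate_of_linearEquiv_adjoinRoot {F M : Type*} [Field F]
    [AddCommGroup M] [Module F M] [Module F[X] M] {q : F[X]} (hq : q.Monic)
    (e : M ≃ₗ[F] AdjoinRoot q) (he : ∀ m : M, e ((X : F[X]) • m) = AdjoinRoot.root q * e m) :
    ∃ B : LinearMap.BilinForm F M, B.Nondegenerate ∧
      ∀ m n : M, B ((X : F[X]) • m) n = B m ((X : F[X]) • n) := by
  refine ⟨(AdjoinRoot.topCoeffForm hq).congr e.symm,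
    (AdjoinRoot.topCoeffForm_nondegenerate hq).congr _, fun m n => ?_⟩
  simp only [LinearMap.BilinForm.congr_apply, LinearEquiv.symm_symm, he,
    AdjoinRoot.topCoeffForm_mul_left]

theorem nonempty_linearEquiv_aeval_dualMap_of_nondegenerate {F M : Type*} [Field F]
    [AddCommGroup M] [Module F M] [Module F[X] M] [IsScalarTower F F[X] M]
    [FiniteDimensional F M] {B : LinearMap.BilinForm F M} (hB : B.Nondegenerate)
    (hX : ∀ m n : M, B ((X : F[X]) • m) n = B m ((X : F[X]) • n)) :
    Nonempty (M ≃ₗ[F[X]] AEval' (XEnd F M).dualMap) := by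
  refine ⟨(LinearEquiv.ofAEval _ (B.toDual hB).symm fun φ => ?_).symm⟩
  apply (B.toDual hB).injective
  ext n
  simp only [LinearMap.BilinForm.toDual_def, hX, LinearMap.BilinForm.apply_toDual_symm_apply]
  rfl

/-- A cyclic `F[X]`-module that is finite-dimensional over `F` is isomorphic, as an
`F[X]`-module, to its `F`-linear dual (with action `(f·φ)(m) = φ(f·m)`). -/
theorem stmt11 {F M : Type*} [Field F] [AddCommGroup M] [Module F M]
    [Module F[X] M] [IsScalarTower F F[X] M] [FiniteDimensional F M]
    (hcyc : ∃ m : M, Submodule.span F[X] {m} = ⊤) :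
    Nonempty (M ≃ₗ[F[X]] Module.AEval' ((XEnd F M).dualMap)) := by
  obtain ⟨q, hq, e, he⟩ := exists_monic_linearEquiv_adjoinRoot hcyc
  obtain ⟨B, hB, hX⟩ := exists_bilinForm_nondegenerate_of_linearEquiv_adjoinRoot hq e he
  exact nonempty_linearEquiv_aeval_dualMap_of_nondegenerate hB hX
end

section
/- Every F[X]-module M that is finite-dimensional over F is isomorphic as an F[X]-module to its F-linear dual M^∨. -/
/-!
By the structure theorem, `M` is a finite direct sum of cyclic modules `F[X] ⧸ (q)`. For `q`
monic of degree `n`, the form `(a, b) ↦ coeff_{n-1} (a * b mod q)` on `F[X] ⧸ (q)` is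
nondegenerate (pair the class of `r` with `X ^ (n - 1 - deg r)`) and `F[X]`-invariant, since it
factors through multiplication. The orthogonal sum of these forms is a nondegenerate form `B` on
`M` with `B (X • x) y = B x (X • y)`, so `x ↦ B x` is an `F[X]`-linear isomorphism `M ≃ M^∨`.
-/

open Polynomial Module

section InvariantForm

variable (F R N : Type*) [CommRing F] [CommRing R] [Algebra F R] [AddCommGroup N] [Module F N]
  [Module R N] [IsScalarTower F R N]

def HasSeparatingInvariantForm : Prop :=
  ∃ B : LinearMap.BilinForm F N, B.SeparatingLeft ∧ ∀ (r : R) (x y : N), B (r • x) y = B x (r • y)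

namespace HasSeparatingInvariantForm

variable {F R N}

theorem of_linearEquiv {N' : Type*} [AddCommGroup N'] [Module F N'] [Module R N']
    [IsScalarTower F R N'] (h : HasSeparatingInvariantForm F R N) (e : N ≃ₗ[R] N') :
    HasSeparatingInvariantForm F R N' := by
  obtain ⟨B, hsep, hinv⟩ := h
  let e' : N' →ₗ[F] N := (e.symm : N' →ₗ[R] N).restrictScalars F
  refine ⟨B.compl₁₂ e' e', fun x hx => e.symm.injective ?_, fun r x y => ?_⟩
  · rw [map_zero]
    exact hsep _ fun y => by simpa [e'] using hx (e y)
  · simpa [e'] using hinv r (e.symm x) (e.symm y)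

theorem pi {ι : Type*} [Fintype ι] [DecidableEq ι] {N : ι → Type*} [∀ i, AddCommGroup (N i)]
    [∀ i, Module F (N i)] [∀ i, Module R (N i)] [∀ i, IsScalarTower F R (N i)]
    (h : ∀ i, HasSeparatingInvariantForm F R (N i)) :
    HasSeparatingInvariantForm F R (Π i, N i) := by
  choose B hsep hinv using h
  refine ⟨∑ i, (B i).compl₁₂ (LinearMap.proj i) (LinearMap.proj i), fun x hx => ?_,
    fun r x y => ?_⟩
  · ext i
    refine hsep i (x i) fun b => ?_
    have h := hx (Pi.single i b)
    simp only [LinearMap.coe_sum, Finset.sum_apply, LinearMap.compl₁₂_apply,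
      LinearMap.proj_apply] at h
    rwa [Fintype.sum_eq_single i fun j hj => by rw [Pi.single_eq_of_ne hj, map_zero],
      Pi.single_eq_same] at h
  · simp [hinv]

theorem of_functional {A : Type*} [CommRing A] [Algebra F A] [Algebra R A] [IsScalarTower F R A]
    (φ : A →ₗ[F] F) (hφ : ∀ a ≠ 0, ∃ b, φ (a * b) ≠ 0) : HasSeparatingInvariantForm F R A :=
  ⟨(LinearMap.mul F A).compr₂ φ,
    fun a ha => by_contra fun h0 => (hφ a h0).elim fun b hb => hb (ha b),
    fun r a b => by simp⟩

end HasSeparatingInvariantForm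

end InvariantForm

theorem AdjoinRoot.exists_coeff_modByMonicHom_mul_ne_zero {F : Type*} [CommRing F] [Nontrivial F]
    {q : F[X]} (hq : q.Monic) {a : AdjoinRoot q} (ha : a ≠ 0) :
    ∃ b, (modByMonicHom hq (a * b)).coeff (q.natDegree - 1) ≠ 0 := by
  obtain ⟨p, rfl⟩ := mk_surjective a
  set r := p %ₘ q
  have hpr : mk q p = mk q r := (mk_leftInverse hq (mk q p)).symm
  have hr : r ≠ 0 := fun h => ha (by rw [hpr, h, map_zero])
  have hdeg : r.natDegree < q.natDegree := natDegree_lt_natDegree hr (degree_modByMonic_lt p hq)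
  set k := q.natDegree - 1 - r.natDegree
  refine ⟨root q ^ k, ?_⟩
  have hdeg_mul : (r * X ^ k).natDegree < q.natDegree := by
    have := natDegree_mul_le (p := r) (q := X ^ k)
    have := natDegree_X_pow_le (R := F) k
    omega
  rw [hpr, ← mk_X, ← map_pow, ← map_mul, modByMonicHom_mk,
    (modByMonic_eq_self_iff hq).mpr (degree_lt_degree hdeg_mul),
    show q.natDegree - 1 = r.natDegree + k by omega, coeff_mul_X_pow]
  exact leadingCoeff_ne_zero.mpr hr

theorem hasSeparatingInvariantForm_quotient_span_monic {F : Type*} [CommRing F] [Nontrivial F]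
    {q : F[X]} (hq : q.Monic) : HasSeparatingInvariantForm F F[X] (F[X] ⧸ Ideal.span {q}) :=
  -- `AdjoinRoot q` carries no `F[X]`-module structure, but is by definition this quotient ring
  .of_functional ((lcoeff F (q.natDegree - 1)).comp (AdjoinRoot.modByMonicHom hq))
    fun _ ha => AdjoinRoot.exists_coeff_modByMonicHom_mul_ne_zero hq ha

theorem hasSeparatingInvariantForm_quotient_span_singleton {F : Type*} [Field F] {q : F[X]}
    (hq : q ≠ 0) : HasSeparatingInvariantForm F F[X] (F[X] ⧸ F[X] ∙ q) := by
  classical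
  exact (hasSeparatingInvariantForm_quotient_span_monic (monic_normalize hq)).of_linearEquiv
    (Submodule.quotEquivOfEq _ _ (Ideal.span_singleton_eq_span_singleton.mpr
      (associated_normalize q).symm))

section FiniteDimensional

variable {F M : Type*} [Field F] [AddCommGroup M] [Module F M] [Module F[X] M]
  [IsScalarTower F F[X] M]

theorem hasSeparatingInvariantForm_of_isTorsion [Module.Finite F[X] M]
    (hM : Module.IsTorsion F[X] M) : HasSeparatingInvariantForm F F[X] M := by
  classical
  obtain ⟨ι, _, p, hp, e, ⟨f⟩⟩ := Module.equiv_directSum_of_isTorsion hM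
  exact (HasSeparatingInvariantForm.pi fun i => hasSeparatingInvariantForm_quotient_span_singleton
    (pow_ne_zero (e i) (hp i).ne_zero)).of_linearEquiv
      (f.trans (DirectSum.linearEquivFunOnFintype F[X] ι _)).symm

variable [FiniteDimensional F M]

theorem isTorsion_polynomial_of_finiteDimensional : Module.IsTorsion F[X] M := by
  intro x
  let f : F[X] →ₗ[F] M := (LinearMap.toSpanSingleton F[X] M x).restrictScalars F
  obtain ⟨r, hr, hr0⟩ : ∃ r, f r = 0 ∧ r ≠ 0 := by
    by_contra! h
    exact Polynomial.not_finite (Module.Finite.of_injective f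
      ((injective_iff_map_eq_zero f).mpr h))
  exact ⟨⟨r, mem_nonZeroDivisors_of_ne_zero hr0⟩, hr⟩

theorem nonempty_linearEquiv_aeval'_dualMap (h : HasSeparatingInvariantForm F F[X] M) :
    Nonempty (M ≃ₗ[F[X]] AEval' (XEnd F M).dualMap) := by
  obtain ⟨B, hsep, hinv⟩ := h
  let E : M ≃ₗ[F] Dual F M := B.linearEquivOfInjective
    (LinearMap.ker_eq_bot.mp (LinearMap.separatingLeft_iff_ker_eq_bot.mp hsep))
    Subspace.dual_finrank_eq.symm
  refine ⟨(LinearEquiv.ofAEval _ E.symm fun φ => E.injective ?_).symm⟩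
  obtain ⟨m, rfl⟩ := E.surjective φ
  rw [LinearEquiv.apply_symm_apply, LinearEquiv.symm_apply_apply]
  ext y
  simp [E, XEnd, hinv]

end FiniteDimensional

/-- Every `F[X]`-module that is finite-dimensional over `F` is isomorphic, as an
`F[X]`-module, to its `F`-linear dual (with action `(f·φ)(m) = φ(f·m)`). -/
theorem stmt12 {F M : Type*} [Field F] [AddCommGroup M] [Module F M]
    [Module F[X] M] [IsScalarTower F F[X] M] [FiniteDimensional F M] :
    Nonempty (M ≃ₗ[F[X]] Module.AEval' ((XEnd F M).dualMap)) := by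
  have : Module.Finite F[X] M := .of_restrictScalars_finite F F[X] M
  exact nonempty_linearEquiv_aeval'_dualMap
    (hasSeparatingInvariantForm_of_isTorsion isTorsion_polynomial_of_finiteDimensional)
end

section
/- Let M be a cyclic F[X]-module, finite-dimensional over F, and let η : M → M^∨ be any F[X]-module homomorphism. Define η^∨ : M → M^∨ by η^∨(w)(v) = η(v)(w). Then η^∨ = η. -/
open Polynomial Module

lemma XEnd_pow_apply {F M : Type*} [Field F] [AddCommGroup M] [Module F M]
    [Module F[X] M] [IsScalarTower F F[X] M] (n : ℕ) (v : M) :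
    ((XEnd F M) ^ n) v = (X : F[X]) ^ n • v := by
  induction n generalizing v with
  | zero => simp
  | succ n ih =>
    rw [pow_succ, Module.End.mul_apply]
    show (XEnd F M ^ n) ((X : F[X]) • v) = _
    rw [ih, ← mul_smul, ← pow_succ]

lemma aeval_XEnd_apply {F M : Type*} [Field F] [AddCommGroup M] [Module F M]
    [Module F[X] M] [IsScalarTower F F[X] M] (p : F[X]) (v : M) :
    (Polynomial.aeval (XEnd F M) p) v = p • v := by
  induction p using Polynomial.induction_on' with
  | add p q hp hq => rw [map_add, LinearMap.add_apply, hp, hq, add_smul]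
  | monomial n a =>
    rw [aeval_monomial, Module.End.mul_apply, XEnd_pow_apply]
    simp only [Module.algebraMap_end_apply, map_smul]
    rw [← smul_assoc, Polynomial.smul_X_eq_monomial]

lemma dualMap_pow {F M : Type*} [Field F] [AddCommGroup M] [Module F M]
    (f : M →ₗ[F] M) (n : ℕ) (φ : Module.Dual F M) (v : M) :
    ((f.dualMap ^ n) φ) v = φ ((f ^ n) v) := by
  induction n generalizing φ with
  | zero => simp
  | succ n ih =>
    rw [pow_succ, pow_succ', Module.End.mul_apply, Module.End.mul_apply, ih]
    rfl

lemma aeval_dualMap_apply {F M : Type*} [Field F] [AddCommGroup M] [Module F M]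
    (f : M →ₗ[F] M) (p : F[X]) (φ : Module.Dual F M) (v : M) :
    ((Polynomial.aeval f.dualMap p) φ) v = φ ((Polynomial.aeval f p) v) := by
  induction p using Polynomial.induction_on' with
  | add p q hp hq => simp [hp, hq]
  | monomial n a =>
    simp only [aeval_monomial, Module.End.mul_apply, Module.algebraMap_end_apply,
      LinearMap.smul_apply, map_smul]
    rw [dualMap_pow]

/-- Let `M` be a cyclic `F[X]`-module, finite-dimensional over `F`, and let
`η : M → M^∨` be any `F[X]`-module homomorphism into the dual module.  Then
`η^∨ = η`, i.e. `η(w)(v) = η(v)(w)` for all `v, w ∈ M`. -/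
theorem stmt15 {F M : Type*} [Field F] [AddCommGroup M] [Module F M]
    [Module F[X] M] [IsScalarTower F F[X] M] [FiniteDimensional F M]
    (hcyc : ∃ m : M, Submodule.span F[X] {m} = ⊤)
    (η : M →ₗ[F[X]] Module.AEval' ((XEnd F M).dualMap)) :
    ∀ v w : M,
      ((Module.AEval'.of ((XEnd F M).dualMap)).symm (η w)) v
        = ((Module.AEval'.of ((XEnd F M).dualMap)).symm (η v)) w := by
  obtain ⟨m, hm⟩ := hcyc
  have key : ∀ x : M, ∃ p : F[X], p • m = x := by
    intro x
    have hx : x ∈ Submodule.span F[X] {m} := hm ▸ Submodule.mem_top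
    rwa [Submodule.mem_span_singleton] at hx
  -- main computation: η (p • m) applied to y equals η m applied to (p • y)
  have main : ∀ (p : F[X]) (y : M),
      ((Module.AEval'.of ((XEnd F M).dualMap)).symm (η (p • m))) y
        = ((Module.AEval'.of ((XEnd F M).dualMap)).symm (η m)) (p • y) := by
    intro p y
    rw [map_smul, Module.AEval.of_symm_smul]
    change ((Polynomial.aeval ((XEnd F M).dualMap) p) _) y = _
    rw [aeval_dualMap_apply, aeval_XEnd_apply]
  intro v w
  obtain ⟨p, rfl⟩ := key v
  obtain ⟨q, rfl⟩ := key w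
  rw [main, main, smul_smul, smul_smul, mul_comm]
end

section
/- Let a ∈ Mₙ(F) be such that the F[X]-module V_a (Fⁿ with X acting by a) is cyclic, i.e., the minimal polynomial of a equals its characteristic polynomial. Then every g ∈ GLₙ(F) satisfying g a g⁻¹ = aᵀ is symmetric: gᵀ = g. -/
open Polynomial Matrix

/-- If `V_a = Fⁿ` (with `X` acting by `a`) is a cyclic `F[X]`-module (equivalently,
the minimal polynomial of `a` equals its characteristic polynomial), then every
`g ∈ GLₙ(F)` with `g a g⁻¹ = aᵀ` is symmetric. -/
theorem stmt16 {F : Type*} [Field F] {n : ℕ} (a : Matrix (Fin n) (Fin n) F)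
    (hcyc : ∃ v : Fin n → F, ∀ w : Fin n → F,
      ∃ p : F[X], (Polynomial.aeval a p).mulVec v = w)
    (g : GL (Fin n) F)
    (hg : (g : Matrix (Fin n) (Fin n) F) * a
        * ((g⁻¹ : GL (Fin n) F) : Matrix (Fin n) (Fin n) F) = aᵀ) :
    (g : Matrix (Fin n) (Fin n) F)ᵀ = (g : Matrix (Fin n) (Fin n) F) := by
  obtain ⟨v, hv⟩ := hcyc
  set G : Matrix (Fin n) (Fin n) F := (g : Matrix (Fin n) (Fin n) F) with hG
  -- g a = aᵀ g
  have hga : G * a = aᵀ * G := by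
    have h1 : ((g⁻¹ : GL (Fin n) F) : Matrix (Fin n) (Fin n) F) * G = 1 := by
      rw [hG]
      exact g.inv_mul
    calc G * a = G * a * (((g⁻¹ : GL (Fin n) F) : Matrix (Fin n) (Fin n) F) * G) := by
          rw [h1, mul_one]
      _ = (G * a * ((g⁻¹ : GL (Fin n) F) : Matrix (Fin n) (Fin n) F)) * G := by
          simp only [mul_assoc]
      _ = aᵀ * G := by rw [hg]
  -- powers
  have hpow : ∀ k : ℕ, G * a ^ k = (a ^ k)ᵀ * G := by
    intro k
    induction k with
    | zero => simp
    | succ k ih =>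
      rw [pow_succ, ← mul_assoc, ih, mul_assoc, hga, ← mul_assoc, ← transpose_mul,
        ← pow_succ', ← pow_succ]
  -- polynomials
  have hcomm : ∀ p : F[X], G * (aeval a p) = (aeval a p)ᵀ * G := by
    intro p
    induction p using Polynomial.induction_on' with
    | add p q hp hq => simp [mul_add, add_mul, transpose_add, hp, hq]
    | monomial k c =>
      simp [aeval_monomial, Algebra.algebraMap_eq_smul_one, smul_mul_assoc,
        mul_smul_comm, hpow k, transpose_smul]
  -- transpose-dot helper
  have hdp : ∀ (M : Matrix (Fin n) (Fin n) F) (x y : Fin n → F),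
      (M *ᵥ x) ⬝ᵥ y = x ⬝ᵥ (Mᵀ *ᵥ y) := by
    intro M x y
    rw [dotProduct_comm, dotProduct_mulVec, dotProduct_comm, mulVec_transpose]
  -- symmetry of the bilinear form
  have key : ∀ x y : Fin n → F, x ⬝ᵥ (G *ᵥ y) = y ⬝ᵥ (G *ᵥ x) := by
    intro x y
    obtain ⟨p, hp⟩ := hv x
    obtain ⟨q, hq⟩ := hv y
    set P := aeval a p with hP
    set Q := aeval a q with hQ
    have hmat : Pᵀ * (G * Q) = Qᵀ * (G * P) := by
      rw [← mul_assoc, ← hcomm p, ← mul_assoc, ← hcomm q, mul_assoc, mul_assoc,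
        hP, hQ, ← _root_.map_mul, ← _root_.map_mul, mul_comm p q]
    calc x ⬝ᵥ (G *ᵥ y) = (P *ᵥ v) ⬝ᵥ (G *ᵥ (Q *ᵥ v)) := by rw [hp, hq]
      _ = v ⬝ᵥ ((Pᵀ * (G * Q)) *ᵥ v) := by
          rw [hdp, mulVec_mulVec, mulVec_mulVec, ← mul_assoc, mul_assoc]
      _ = v ⬝ᵥ ((Qᵀ * (G * P)) *ᵥ v) := by rw [hmat]
      _ = (Q *ᵥ v) ⬝ᵥ (G *ᵥ (P *ᵥ v)) := by
          rw [hdp, mulVec_mulVec, mulVec_mulVec, ← mul_assoc, mul_assoc]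
      _ = y ⬝ᵥ (G *ᵥ x) := by rw [hp, hq]
  ext i j
  have h := key (Pi.single j 1) (Pi.single i 1)
  simpa [dotProduct, Matrix.mulVec, Pi.single_apply, Finset.mul_sum,
    Finset.sum_ite_eq, Finset.sum_ite_eq', mul_comm] using h
end

section
/- Let a ∈ Mₙ(F) be such that the F[X]-module V_a is not cyclic (the minimal polynomial of a is a proper divisor of the characteristic polynomial). Then there exists g ∈ GLₙ(F) with g a g⁻¹ = aᵀ and gᵀ ≠ g. -/
/-!
Decompose `V_a` as a direct sum of cyclic modules `F[X]/(qᵢ)`. Each summand carries the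
nondegenerate `F[X]`-balanced form `(u, v) ↦ coeff_{deg qᵢ - 1}(u v)`, and the orthogonal sum of
these is balanced and nondegenerate, hence its Gram matrix `g` is invertible with `aᵀ g = g a`.
Since `V_a` is not cyclic, two of the `qᵢ` share a factor, so there is a nonzero `F[X]`-linear
map `φ : F[X]/(q_j) → F[X]/(q_i)`. Adding the term `(s, t) ↦ coeff(s_i φ(t_j))` keeps the form
balanced and, being triangular, nondegenerate, but destroys its symmetry.
-/

open Polynomial Matrix DirectSum
open LinearMap (BilinForm)

universe u

namespace LinearMap.BilinForm

def IsBalanced {R M : Type*} [CommSemiring R] [AddCommMonoid M] [Module R M] (A : Type*)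
    [SMul A M] (B : BilinForm R M) : Prop :=
  ∀ (a : A) (x y : M), B (a • x) y = B x (a • y)

theorem isBalanced_mul_compr₂ {R S : Type*} (A : Type*) [CommRing R] [CommRing S] [Algebra R S]
    [SMul A S] [IsScalarTower A S S] [SMulCommClass A S S] (T : S →ₗ[R] R) :
    IsBalanced A ((LinearMap.mul R S).compr₂ T) := by
  intro a x y
  simp only [LinearMap.compr₂_apply, LinearMap.mul_apply', smul_mul_assoc, mul_smul_comm]

theorem IsBalanced.isAdjointPair_congr {R M V A : Type*} [CommSemiring R] [AddCommMonoid M]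
    [Module R M] [AddCommMonoid V] [Module R V] [SMul A M] {B : BilinForm R M}
    (hB : IsBalanced A B) (E : V ≃ₗ[R] M) {f : V → V} (a : A) (hE : ∀ x, E (f x) = a • E x) :
    (congr E.symm B).IsAdjointPair (congr E.symm B) f f := by
  intro x y
  simp only [congr_apply, LinearEquiv.symm_symm, hE, hB a]

end LinearMap.BilinForm

open LinearMap.BilinForm

section TopCoeff

variable {R : Type*} [CommRing R] {q : R[X]}

/-- `AdjoinRoot q` is by definition `R[X] ⧸ R[X] ∙ q`, so `AdjoinRoot.modByMonicHom` applies. -/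
noncomputable def topCoeff (hq : q.Monic) : (R[X] ⧸ R[X] ∙ q) →ₗ[R] R :=
  lcoeff R (q.natDegree - 1) ∘ₗ AdjoinRoot.modByMonicHom hq

theorem topCoeff_mk (hq : q.Monic) (f : R[X]) :
    topCoeff hq (Submodule.Quotient.mk f) = (f %ₘ q).coeff (q.natDegree - 1) := rfl

/-- If `r ≠ 0` is reduced of degree `m`, pairing with `X ^ (deg q - 1 - m)` picks out the
leading coefficient of `r`. -/
theorem separatingRight_mul_compr₂_topCoeff (hq : q.Monic) :
    ((LinearMap.mul R (R[X] ⧸ R[X] ∙ q)).compr₂ (topCoeff hq)).SeparatingRight := by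
  intro u hu
  obtain ⟨f, rfl⟩ := Submodule.Quotient.mk_surjective _ u
  set r := f %ₘ q
  have hmk : (Submodule.Quotient.mk r : R[X] ⧸ R[X] ∙ q) = Submodule.Quotient.mk f :=
    AdjoinRoot.mk_leftInverse hq (AdjoinRoot.mk q f)
  rw [← hmk] at hu ⊢
  by_contra hr
  have hr0 : r ≠ 0 := by rintro h; rw [h] at hr; exact hr rfl
  have : Nontrivial R := nontrivial_of_ne _ _ (leadingCoeff_ne_zero.mpr hr0)
  have hrq : r.natDegree < q.natDegree :=
    natDegree_lt_natDegree hr0 (degree_modByMonic_lt f hq)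
  set k := q.natDegree - 1 - r.natDegree
  have hdeg : (r * X ^ k).degree < q.degree := by
    refine degree_lt_degree ((natDegree_mul_le.trans
      (Nat.add_le_add_left (natDegree_X_pow_le k) _)).trans_lt ?_)
    omega
  apply leadingCoeff_ne_zero.mpr hr0
  have h := hu (Submodule.Quotient.mk (X ^ k))
  change topCoeff hq (Submodule.Quotient.mk (X ^ k * r)) = 0 at h
  rwa [mul_comm, topCoeff_mk, (modByMonic_eq_self_iff hq).mpr hdeg,
    show q.natDegree - 1 = r.natDegree + k by omega, coeff_mul_X_pow] at h

end TopCoeff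

section TwistedSum

variable {ι R A : Type*} [Fintype ι] [CommSemiring R] [Semiring A] [Algebra R A]
  {N : ι → Type*} [∀ i, AddCommMonoid (N i)] [∀ i, Module R (N i)] [∀ i, Module A (N i)]
  [∀ i, IsScalarTower R A (N i)]

noncomputable def twistedSumForm (τ : ∀ i, BilinForm R (N i)) (i₀ j₀ : ι)
    (φ : N j₀ →ₗ[A] N i₀) : BilinForm R (⨁ i, N i) :=
  ∑ i, (τ i).compl₁₂ (component R ι N i) (component R ι N i) +
    (τ i₀).compl₁₂ (component R ι N i₀) (φ.restrictScalars R ∘ₗ component R ι N j₀)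

variable (τ : ∀ i, BilinForm R (N i)) {i₀ j₀ : ι} (φ : N j₀ →ₗ[A] N i₀)

theorem twistedSumForm_apply (s t : ⨁ i, N i) :
    twistedSumForm τ i₀ j₀ φ s t = ∑ i, τ i (s i) (t i) + τ i₀ (s i₀) (φ (t j₀)) := by
  simp [twistedSumForm, LinearMap.sum_apply, ← apply_eq_component]

theorem twistedSumForm_of_left [DecidableEq ι] (k : ι) (v : N k) (t : ⨁ i, N i) :
    twistedSumForm τ i₀ j₀ φ (of N k v) t = τ k v (t k) + τ i₀ (of N k v i₀) (φ (t j₀)) := by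
  rw [twistedSumForm_apply, Finset.sum_eq_single k
    (fun i _ hi => by rw [of_eq_of_ne _ _ _ hi, LinearMap.map_zero₂]) (by simp), of_eq_same]

theorem isBalanced_twistedSumForm (hτ : ∀ i, IsBalanced A (τ i)) :
    IsBalanced A (twistedSumForm τ i₀ j₀ φ) := by
  intro a s t
  simp only [twistedSumForm_apply, DirectSum.smul_apply, map_smul, hτ _ a]

theorem separatingRight_twistedSumForm [DecidableEq ι] (hτ : ∀ i, (τ i).SeparatingRight)
    (hij : i₀ ≠ j₀) : (twistedSumForm τ i₀ j₀ φ).SeparatingRight := by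
  intro t ht
  have hoff : ∀ k, k ≠ i₀ → t k = 0 := fun k hk => hτ k (t k) fun v => by
    simpa [twistedSumForm_of_left, of_eq_of_ne _ _ _ hk.symm] using ht (of N k v)
  have hi₀ : t i₀ = 0 := hτ i₀ (t i₀) fun v => by
    simpa [twistedSumForm_of_left, hoff j₀ hij.symm] using ht (of N i₀ v)
  ext k
  by_cases hk : k = i₀
  · subst hk; simp [hi₀]
  · simp [hoff k hk]

theorem not_isSymm_twistedSumForm [DecidableEq ι] (hτ : (τ i₀).SeparatingRight)
    (hij : i₀ ≠ j₀) (hφ : φ ≠ 0) : ¬ (twistedSumForm τ i₀ j₀ φ).IsSymm := by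
  intro hsymm
  obtain ⟨w, hw⟩ := DFunLike.ne_iff.mp hφ
  obtain ⟨v, hv⟩ : ∃ v, τ i₀ v (φ w) ≠ 0 := by
    by_contra! h
    exact hw (hτ _ h)
  apply hv
  simpa [twistedSumForm_of_left, of_eq_of_ne _ _ _ hij, of_eq_of_ne _ _ _ hij.symm] using
    hsymm.eq (of N i₀ v) (of N j₀ w)

end TwistedSum

theorem exists_linearMap_quotient_ne_zero {S : Type*} [CommRing S] [IsDomain S] {q r d : S}
    (hq : q ≠ 0) (hdq : d ∣ q) (hdr : d ∣ r) (hd : ¬ IsUnit d) :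
    ∃ φ : (S ⧸ S ∙ r) →ₗ[S] S ⧸ S ∙ q, φ ≠ 0 := by
  obtain ⟨c, rfl⟩ := hdq
  obtain ⟨r', rfl⟩ := hdr
  have hc : c ≠ 0 := right_ne_zero_of_mul hq
  refine ⟨Submodule.mapQ _ _ (LinearMap.mulRight S c) ?_, fun h => hd ?_⟩
  · rw [Submodule.span_singleton_le_iff_mem, Submodule.mem_comap, LinearMap.mulRight_apply,
      Submodule.mem_span_singleton]
    exact ⟨r', by rw [smul_eq_mul]; ring⟩
  · have h1 := LinearMap.congr_fun h (Submodule.Quotient.mk 1)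
    rw [Submodule.mapQ_apply, LinearMap.mulRight_apply, one_mul, LinearMap.zero_apply,
      Submodule.Quotient.mk_eq_zero, ← Ideal.span, Ideal.mem_span_singleton] at h1
    exact isUnit_of_dvd_one ((mul_dvd_mul_iff_right hc).mp (by simpa using h1))

theorem exists_balanced_separatingRight_not_isSymm {ι K : Type*} [Fintype ι] [DecidableEq ι]
    [Field K] {q : ι → K[X]} (hq : ∀ i, (q i).Monic) {i j : ι} (hij : i ≠ j)
    (hcop : ¬ IsCoprime (q i) (q j)) :
    ∃ B : BilinForm K (⨁ i, K[X] ⧸ K[X] ∙ q i),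
      IsBalanced K[X] B ∧ B.SeparatingRight ∧ ¬ B.IsSymm := by
  obtain ⟨d, hdi, hdj, hd⟩ : ∃ d, d ∣ q i ∧ d ∣ q j ∧ ¬ IsUnit d := by
    rw [← isRelPrime_iff_isCoprime] at hcop
    simpa [IsRelPrime] using hcop
  obtain ⟨φ, hφ⟩ := exists_linearMap_quotient_ne_zero (hq i).ne_zero hdi hdj hd
  let τ k := (LinearMap.mul K _).compr₂ (topCoeff (hq k))
  have hτ k : (τ k).SeparatingRight := separatingRight_mul_compr₂_topCoeff (hq k)
  exact ⟨twistedSumForm τ i j φ, isBalanced_twistedSumForm τ φ fun k => isBalanced_mul_compr₂ _ _,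
    separatingRight_twistedSumForm τ φ hτ hij, not_isSymm_twistedSumForm τ φ (hτ i) hij hφ⟩

theorem exists_generator_directSum_quotient_of_pairwise_isCoprime {ι S : Type*} [Fintype ι]
    [CommRing S] {q : ι → S} (hq : Pairwise fun i j => IsCoprime (q i) (q j)) :
    ∃ v : ⨁ i, S ⧸ S ∙ q i, ∀ w, ∃ f : S, f • v = w := by
  refine ⟨(linearEquivFunOnFintype S ι _).symm fun _ => Submodule.Quotient.mk 1, fun w => ?_⟩
  have hI : Pairwise fun i j => IsCoprime (Ideal.span {q i}) (Ideal.span {q j}) :=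
    fun i j hij => (Ideal.isCoprime_span_singleton_iff _ _).mpr (hq hij)
  obtain ⟨z, hz⟩ := Ideal.quotientInfToPiQuotient_surj hI (fun i => w i)
  obtain ⟨f, rfl⟩ := Ideal.Quotient.mk_surjective z
  refine ⟨f, DFinsupp.ext fun i => ?_⟩
  change f • Submodule.Quotient.mk 1 = w i
  rw [← Submodule.Quotient.mk_smul, smul_eq_mul, mul_one]
  exact congrFun hz i

theorem exists_linearEquiv_directSum_quotient_monic {K : Type u} [Field K] {M : Type*}
    [AddCommGroup M] [Module K[X] M] [Module.Finite K[X] M] (hM : Module.IsTorsion K[X] M) :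
    ∃ (ι : Type u) (_ : Fintype ι) (q : ι → K[X]), (∀ i, (q i).Monic) ∧
      Nonempty (M ≃ₗ[K[X]] ⨁ i, K[X] ⧸ K[X] ∙ q i) := by
  classical
  obtain ⟨ι, _, p, hp, e, ⟨l⟩⟩ := Module.equiv_directSum_of_isTorsion hM
  have hspan : ∀ i, K[X] ∙ p i ^ e i = K[X] ∙ normalize (p i ^ e i) := fun i =>
    Ideal.span_singleton_eq_span_singleton.mpr (associated_normalize _)
  exact ⟨ι, inferInstance, fun i => normalize (p i ^ e i),
    fun i => monic_normalize (pow_ne_zero _ (hp i).ne_zero),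
    ⟨l.trans (DFinsupp.mapRange.linearEquiv fun i => Submodule.quotEquivOfEq _ _ (hspan i))⟩⟩

theorem exists_GL_mul_mul_inv_eq_transpose_of_bilinForm {m F : Type*} [Field F] [Fintype m]
    [DecidableEq m] {a : Matrix m m F} {B : BilinForm F (m → F)}
    (hadj : B.IsAdjointPair B (a *ᵥ ·) (a *ᵥ ·)) (hsep : B.SeparatingRight) (hsymm : ¬ B.IsSymm) :
    ∃ g : GL m F, (g : Matrix m m F) * a * (g⁻¹ : GL m F) = aᵀ ∧ (g : Matrix m m F)ᵀ ≠ g := by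
  set g := LinearMap.toMatrix₂' F B
  have hB : Matrix.toLinearMap₂' F g = B := Matrix.toLinearMap₂'_toMatrix' B
  have hcomm : aᵀ * g = g * a := by
    rw [← Matrix.IsAdjointPair, ← isAdjointPair_toLinearMap₂', hB]
    exact hadj
  have hdet : IsUnit g.det := by
    rw [isUnit_iff_ne_zero, ← LinearMap.separatingRight_toLinearMap₂'_iff_det_ne_zero, hB]
    exact hsep
  refine ⟨Matrix.GeneralLinearGroup.mk'' g hdet, ?_, fun hg => hsymm ?_⟩
  · simp [← hcomm, Matrix.mul_assoc, Matrix.mul_nonsing_inv g hdet]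
  · rw [← LinearMap.BilinForm.isSymm_toMatrix'_iff_isSymm]
    exact hg

/-- If `V_a = Fⁿ` (with `X` acting by `a`) is not a cyclic `F[X]`-module, then there
is `g ∈ GLₙ(F)` with `g a g⁻¹ = aᵀ` and `gᵀ ≠ g`. -/
theorem stmt17 {F : Type*} [Field F] {n : ℕ} (a : Matrix (Fin n) (Fin n) F)
    (hncyc : ¬ ∃ v : Fin n → F, ∀ w : Fin n → F,
      ∃ p : F[X], (Polynomial.aeval a p).mulVec v = w) :
    ∃ g : GL (Fin n) F,
      (g : Matrix (Fin n) (Fin n) F) * a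
          * ((g⁻¹ : GL (Fin n) F) : Matrix (Fin n) (Fin n) F) = aᵀ ∧
      (g : Matrix (Fin n) (Fin n) F)ᵀ ≠ (g : Matrix (Fin n) (Fin n) F) := by
  classical
  obtain ⟨ι, _, q, hq, ⟨e⟩⟩ := exists_linearEquiv_directSum_quotient_monic
    (Module.AEval.isTorsion_of_finiteDimensional F (Fin n → F) (toLin' a))
  let E : (Fin n → F) ≃ₗ[F] ⨁ i, F[X] ⧸ F[X] ∙ q i :=
    (Module.AEval'.of _).trans (e.restrictScalars F)
  have hE (f : F[X]) (x : Fin n → F) : E (aeval a f *ᵥ x) = f • E x := by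
    rw [← toLinAlgEquiv'_apply, ← aeval_algHom_apply]
    exact map_smul e f _
  obtain ⟨i, j, hij, hcop⟩ : ∃ i j, i ≠ j ∧ ¬ IsCoprime (q i) (q j) := by
    by_contra! hcop
    obtain ⟨v, hv⟩ := exists_generator_directSum_quotient_of_pairwise_isCoprime hcop
    refine hncyc ⟨E.symm v, fun w => ?_⟩
    obtain ⟨f, hf⟩ := hv (E w)
    exact ⟨f, E.injective (by rw [hE, E.apply_symm_apply, hf])⟩
  obtain ⟨B, hbal, hsep, hsymm⟩ := exists_balanced_separatingRight_not_isSymm hq hij hcop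
  exact exists_GL_mul_mul_inv_eq_transpose_of_bilinForm
    (IsBalanced.isAdjointPair_congr hbal E X fun x => by simpa using hE X x)
    (hsep.congr E.symm E.symm)
    fun h => hsymm ⟨fun x y => by simpa using h.eq (E.symm x) (E.symm y)⟩
end
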